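/- arXiv:1002.1455 — 5 statements merged into one kernel-verified Lean document; each statement's English description precedes it below -/
import Mathlib

section
/- If 𝒯 ⊆ 𝒳^d is finite, one-sided and almost acyclic, then for each x⁰ ∈ 𝒯 there is a nonzero number ℒ of parts and a partition (M_j)_{j∈ℒ} of 𝒯 \ {x⁰} such that: (1) for all i ∈ d and j ≠ k in ℒ, Π_i[M_j] ∩ Π_i[M_k] = ∅; and (2) for all i ∈ d, j ∈ ℒ, and x ∈ M_j, x_i = x⁰_i implies i = j. -/
/-- Two tuples are `G^𝒯`-adjacent if they are distinct members of `𝒯`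
sharing at least one coordinate. -/
def Adjacent {d : ℕ} {X : Type*} (T : Set (Fin d → X)) (x y : Fin d → X) : Prop :=
  x ∈ T ∧ y ∈ T ∧ x ≠ y ∧ ∃ i, x i = y i

/-- A `G^𝒯`-cycle `(x^n)_{n ≤ L}`. -/
def IsGCycle {d : ℕ} {X : Type*} (T : Set (Fin d → X)) (x : ℕ → Fin d → X) (L : ℕ) : Prop :=
  3 ≤ L ∧ x L = x 0 ∧ (∀ n < L, Adjacent T (x n) (x (n + 1))) ∧
    ∀ m n, m < n → n < L → x m ≠ x n

/-- `𝒯` is one-sided: distinct members share at most one coordinate. -/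
def OneSided {d : ℕ} {X : Type*} (T : Set (Fin d → X)) : Prop :=
  ∀ x ∈ T, ∀ y ∈ T, x ≠ y → ∀ i j : Fin d, i ≠ j → x i ≠ y i ∨ x j ≠ y j

/-- `𝒯` is almost acyclic: every `G^𝒯`-cycle contains a flat subcycle. -/
def AlmostAcyclic {d : ℕ} {X : Type*} (T : Set (Fin d → X)) : Prop :=
  ∀ x L, IsGCycle T x L →
    ∃ (i : Fin d) (k m n : ℕ), k < m ∧ m < n ∧ n < L ∧ x k i = x m i ∧ x m i = x n i

/-- A walk inside a set `S`: consecutive vertices are distinct and share a coordinate. -/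
def WalkIn {d : ℕ} {X : Type*} (S : Set (Fin d → X)) (z : ℕ → Fin d → X) (k : ℕ) : Prop :=
  (∀ m ≤ k, z m ∈ S) ∧ ∀ m < k, z m ≠ z (m + 1) ∧ ∃ i, z m i = z (m + 1) i

lemma walkIn_shift {d : ℕ} {X : Type*} {S : Set (Fin d → X)} {z : ℕ → Fin d → X} {k : ℕ}
    (h : WalkIn S z k) (a : ℕ) (ha : a ≤ k) : WalkIn S (fun r => z (a + r)) (k - a) := by
  obtain ⟨hm, he⟩ := h
  refine ⟨fun m hmk => hm _ (by omega), fun m hmk => ?_⟩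
  have := he (a + m) (by omega)
  simpa [Nat.add_assoc] using this

lemma walkIn_trunc {d : ℕ} {X : Type*} {S : Set (Fin d → X)} {z : ℕ → Fin d → X} {k k' : ℕ}
    (h : WalkIn S z k) (hk : k' ≤ k) : WalkIn S z k' :=
  ⟨fun m hm => h.1 m (by omega), fun m hm => h.2 m (by omega)⟩

/-- Remove a loop `z p = z q` from a walk. -/
lemma walkIn_dedupe {d : ℕ} {X : Type*} {S : Set (Fin d → X)} {z : ℕ → Fin d → X} {k p q : ℕ}
    (h : WalkIn S z k) (hpq : p < q) (hqk : q ≤ k) (heq : z p = z q) :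
    WalkIn S (fun r => if r ≤ p then z r else z (r + (q - p))) (k - (q - p)) ∧
    (if (0:ℕ) ≤ p then z 0 else z (0 + (q - p))) = z 0 ∧
    (if k - (q - p) ≤ p then z (k - (q-p)) else z (k - (q - p) + (q - p))) = z k := by
  obtain ⟨hm, he⟩ := h
  set t := q - p with ht
  refine ⟨⟨fun m hmk => ?_, fun m hmk => ?_⟩, by simp, ?_⟩
  · by_cases hmp : m ≤ p
    · simp only [if_pos hmp]; exact hm m (by omega)
    · simp only [if_neg hmp]; exact hm (m + t) (by omega)
  · rcases lt_trichotomy m p with hc | hc | hc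
    · simp only [if_pos (by omega : m ≤ p), if_pos (by omega : m + 1 ≤ p)]
      exact he m (by omega)
    · subst hc
      simp only [if_pos le_rfl, if_neg (by omega : ¬ m + 1 ≤ m)]
      have : m + 1 + t = q + 1 := by omega
      rw [this, heq]
      exact he q (by omega)
    · simp only [if_neg (by omega : ¬ m ≤ p), if_neg (by omega : ¬ m + 1 ≤ p)]
      have : m + 1 + t = m + t + 1 := by omega
      rw [this]
      exact he (m + t) (by omega)
  · by_cases hkp : k - t ≤ p
    · have h1 : k - t = p := by omega
      have h2 : k = q := by omega
      rw [if_pos hkp, h1, heq, h2]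
    · have : k - t + t = k := by omega
      simp [hkp, this]

/-- Splice a walk along a chord `z p ~ z q`. -/
lemma walkIn_splice {d : ℕ} {X : Type*} {S : Set (Fin d → X)} {z : ℕ → Fin d → X} {k p q : ℕ}
    (h : WalkIn S z k) (hpq : p + 2 ≤ q) (hqk : q ≤ k) (hne : z p ≠ z q)
    (hsh : ∃ i, z p i = z q i) :
    WalkIn S (fun r => if r ≤ p then z r else z (r + (q - p - 1))) (k - (q - p - 1)) ∧
    (if (0:ℕ) ≤ p then z 0 else z (0 + (q - p - 1))) = z 0 ∧
    (if k - (q - p - 1) ≤ p then z (k - (q-p-1)) else z (k - (q - p - 1) + (q - p - 1))) = z k := by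
  obtain ⟨hm, he⟩ := h
  set t := q - p - 1 with ht
  have ht1 : 1 ≤ t := by omega
  refine ⟨⟨fun m hmk => ?_, fun m hmk => ?_⟩, by simp, ?_⟩
  · by_cases hmp : m ≤ p
    · simp only [if_pos hmp]; exact hm m (by omega)
    · simp only [if_neg hmp]; exact hm (m + t) (by omega)
  · rcases lt_trichotomy m p with hc | hc | hc
    · simp only [if_pos (by omega : m ≤ p), if_pos (by omega : m + 1 ≤ p)]
      exact he m (by omega)
    · subst hc
      simp only [if_pos le_rfl, if_neg (by omega : ¬ m + 1 ≤ m)]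
      have : m + 1 + t = q := by omega
      rw [this]
      exact ⟨hne, hsh⟩
    · simp only [if_neg (by omega : ¬ m ≤ p), if_neg (by omega : ¬ m + 1 ≤ p)]
      have : m + 1 + t = m + t + 1 := by omega
      rw [this]
      exact he (m + t) (by omega)
  · have hkp : ¬ (k - t ≤ p) := by omega
    have : k - t + t = k := by omega
    simp [hkp, this]

/-- Key lemma: in a one-sided, almost acyclic family, no walk avoiding `x0` can join a point
sharing coordinate `i` with `x0` to a point sharing a different coordinate `i'` with `x0`. -/
lemma no_two_coords {d : ℕ} {X : Type*} {T : Set (Fin d → X)}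
    (hone : OneSided T) (hac : AlmostAcyclic T) {x0 : Fin d → X} (hx0 : x0 ∈ T) :
    ∀ k, ∀ z : ℕ → Fin d → X, ∀ i i' : Fin d, i ≠ i' → WalkIn (T \ {x0}) z k →
      z 0 i = x0 i → z k i' = x0 i' → False := by
  intro k
  induction k using Nat.strong_induction_on with
  | _ k IH =>
  intro z i i' hii' hW h0 hk
  have hmem : ∀ m ≤ k, z m ∈ T ∧ z m ≠ x0 := by
    intro m hm
    have := hW.1 m hm
    exact ⟨this.1, by simpa using this.2⟩
  rcases Nat.eq_zero_or_pos k with hk0 | hkpos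
  · subst hk0
    have h := hone (z 0) (hmem 0 le_rfl).1 x0 hx0 (hmem 0 le_rfl).2 i i' hii'
    rcases h with h | h
    · exact h h0
    · exact h hk
  -- k ≥ 1
  by_cases hinj : ∀ m n, m < n → n ≤ k → z m ≠ z n
  · -- build a cycle x0, z 0, ..., z k, x0
    set v : ℕ → Fin d → X := fun r => if r = 0 ∨ r = k + 2 then x0 else z (r - 1) with hv
    have hv0 : v 0 = x0 := by simp [hv]
    have hvL : v (k + 2) = x0 := by simp [hv]
    have hvz : ∀ r, 1 ≤ r → r ≤ k + 1 → v r = z (r - 1) := by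
      intro r h1 h2
      simp only [hv]
      rw [if_neg (by omega)]
    have hcyc : IsGCycle T v (k + 2) := by
      refine ⟨by omega, by rw [hvL, hv0], fun n hn => ?_, fun m n hmn hn => ?_⟩
      · rcases Nat.eq_zero_or_pos n with h0' | hnpos
        · subst h0'
          rw [hv0, hvz 1 le_rfl (by omega)]
          exact ⟨hx0, (hmem 0 (by omega)).1, Ne.symm (hmem 0 (by omega)).2,
            ⟨i, (by simpa using h0.symm)⟩⟩
        rcases Nat.lt_or_ge n (k + 1) with hn1 | hn1
        · rw [hvz n hnpos (by omega), hvz (n+1) (by omega) (by omega)]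
          have he := hW.2 (n - 1) (by omega)
          have h1 : n - 1 + 1 = n + 1 - 1 := by omega
          rw [h1] at he
          exact ⟨(hmem (n-1) (by omega)).1, (hmem (n+1-1) (by omega)).1, he.1, he.2⟩
        · have hn2 : n = k + 1 := by omega
          subst hn2
          rw [hvz (k+1) (by omega) le_rfl, (by rw [hvL] : v (k + 1 + 1) = x0)]
          have h1 : k + 1 - 1 = k := by omega
          rw [h1]
          exact ⟨(hmem k le_rfl).1, hx0, (hmem k le_rfl).2, ⟨i', hk⟩⟩
      · rcases Nat.eq_zero_or_pos m with h0' | hmpos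
        · subst h0'
          rw [hv0, hvz n (by omega) (by omega)]
          exact Ne.symm (hmem (n-1) (by omega)).2
        · rw [hvz m hmpos (by omega), hvz n (by omega) (by omega)]
          exact hinj (m - 1) (n - 1) (by omega) (by omega)
    obtain ⟨c, a, b, e, hab, hbe, heL, hc1, hc2⟩ := hac v (k + 2) hcyc
    rcases Nat.eq_zero_or_pos a with ha0 | hapos
    · subst ha0
      rw [hv0] at hc1
      have hzb : z (b - 1) c = x0 c := by
        have := hc1; rw [hvz b (by omega) (by omega)] at this; exact this.symm
      have hze : z (e - 1) c = x0 c := by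
        have h2 := hc2
        rw [hvz b (by omega) (by omega), hvz e (by omega) (by omega)] at h2
        rw [← h2]; exact hzb
      by_cases hci' : c = i'
      · -- prefix walk 0 .. b-1
        subst hci'
        exact IH (b - 1) (by omega) z i c hii' (walkIn_trunc hW (by omega)) h0 hzb
      · -- suffix walk e-1 .. k
        have hW' := walkIn_shift hW (e - 1) (by omega)
        refine IH (k - (e - 1)) (by omega) _ c i' hci' hW' (by simpa using hze) ?_
        have : e - 1 + (k - (e - 1)) = k := by omega
        simpa [this] using hk
    · -- splice: all three on the path
      have hpq : (a - 1) + 2 ≤ e - 1 := by omega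
      have hzac : z (a-1) c = z (e-1) c := by
        have h1 := hc1; have h2 := hc2
        rw [hvz a hapos (by omega), hvz b (by omega) (by omega)] at h1
        rw [hvz b (by omega) (by omega), hvz e (by omega) (by omega)] at h2
        rw [h1, h2]
      obtain ⟨hW', he0, hek⟩ := walkIn_splice hW hpq (by omega)
        (hinj (a-1) (e-1) (by omega) (by omega)) ⟨c, hzac⟩
      rw [if_pos (by omega)] at he0
      refine IH (k - (e - 1 - (a-1) - 1)) (by omega) _ i i' hii' hW' ?_ ?_
      · simpa using h0
      · exact (congrFun hek i').trans hk
  · -- duplicated vertex: shorten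
    push_neg at hinj
    obtain ⟨p, q, hpq, hqk, heq⟩ := hinj
    obtain ⟨hW', he0, hek⟩ := walkIn_dedupe hW hpq hqk heq
    rw [if_pos (by omega)] at he0
    refine IH (k - (q - p)) (by omega) _ i i' hii' hW' ?_ ?_
    · simpa using h0
    · exact (congrFun hek i').trans hk

/-- Connectivity inside `S` via walks. -/
def Conn {d : ℕ} {X : Type*} (S : Set (Fin d → X)) (x y : Fin d → X) : Prop :=
  ∃ k z, WalkIn S z k ∧ z 0 = x ∧ z k = y

lemma conn_refl {d : ℕ} {X : Type*} {S : Set (Fin d → X)} {x : Fin d → X} (hx : x ∈ S) :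
    Conn S x x :=
  ⟨0, fun _ => x, ⟨fun _ _ => hx, fun m hm => absurd hm (by omega)⟩, rfl, rfl⟩

lemma conn_symm {d : ℕ} {X : Type*} {S : Set (Fin d → X)} {x y : Fin d → X}
    (h : Conn S x y) : Conn S y x := by
  obtain ⟨k, z, ⟨hm, he⟩, h0, hk⟩ := h
  refine ⟨k, fun r => z (k - r), ⟨fun m hmk => hm _ (by omega), fun m hmk => ?_⟩,
    by simpa, by simpa⟩
  have h1 : k - m = (k - (m + 1)) + 1 := by omega
  obtain ⟨hne, i, hi⟩ := he (k - (m + 1)) (by omega)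
  constructor
  · show z (k - m) ≠ z (k - (m + 1))
    rw [h1]; exact fun hcon => hne hcon.symm
  · exact ⟨i, by show z (k - m) i = z (k - (m + 1)) i; rw [h1]; exact hi.symm⟩

lemma conn_trans {d : ℕ} {X : Type*} {S : Set (Fin d → X)} {x y w : Fin d → X}
    (h1 : Conn S x y) (h2 : Conn S y w) : Conn S x w := by
  obtain ⟨k1, z1, ⟨hm1, he1⟩, h10, h1k⟩ := h1
  obtain ⟨k2, z2, ⟨hm2, he2⟩, h20, h2k⟩ := h2
  refine ⟨k1 + k2, fun r => if r ≤ k1 then z1 r else z2 (r - k1),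
    ⟨fun m hmk => ?_, fun m hmk => ?_⟩, by simp [h10], ?_⟩
  · by_cases hc : m ≤ k1
    · simp only [if_pos hc]; exact hm1 m hc
    · simp only [if_neg hc]; exact hm2 (m - k1) (by omega)
  · rcases lt_trichotomy m k1 with hc | hc | hc
    · simp only [if_pos (by omega : m ≤ k1), if_pos (by omega : m + 1 ≤ k1)]
      exact he1 m hc
    · subst hc
      simp only [if_pos le_rfl, if_neg (by omega : ¬ m + 1 ≤ m)]
      have h3 : m + 1 - m = 1 := by omega
      rw [h3, h1k, ← h20]
      exact he2 0 (by omega)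
    · simp only [if_neg (by omega : ¬ m ≤ k1), if_neg (by omega : ¬ m + 1 ≤ k1)]
      have h3 : m + 1 - k1 = (m - k1) + 1 := by omega
      rw [h3]
      exact he2 (m - k1) (by omega)
  · by_cases hc : k1 + k2 ≤ k1
    · have : k2 = 0 := by omega
      subst this
      simp only [if_pos hc]
      rw [(by omega : k1 + 0 = k1), h1k, ← h2k]
      exact h20.symm
    · simp only [if_neg hc]
      rw [(by omega : k1 + k2 - k1 = k2), h2k]

lemma conn_step {d : ℕ} {X : Type*} {S : Set (Fin d → X)} {x y : Fin d → X}
    (hx : x ∈ S) (hy : y ∈ S) (hne : x ≠ y) (hsh : ∃ i, x i = y i) : Conn S x y := by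
  refine ⟨1, fun r => if r = 0 then x else y, ⟨fun m hmk => ?_, fun m hmk => ?_⟩, rfl, rfl⟩
  · by_cases hc : m = 0 <;> simp [hc, hx, hy]
  · have : m = 0 := by omega
    subst this
    simpa using ⟨hne, hsh⟩

lemma coord_unique {d : ℕ} {X : Type*} {T : Set (Fin d → X)}
    (hone : OneSided T) (hac : AlmostAcyclic T) {x0 : Fin d → X} (hx0 : x0 ∈ T)
    {x y : Fin d → X} {i i' : Fin d} (hc : Conn (T \ {x0}) x y)
    (hxi : x i = x0 i) (hyi : y i' = x0 i') : i = i' := by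
  by_contra hne
  obtain ⟨k, z, hW, h0, hk⟩ := hc
  exact no_two_coords hone hac hx0 k z i i' hne hW (by rw [h0]; exact hxi)
    (by rw [hk]; exact hyi)

/-- The `j`-th part of the partition. -/
def PartM {d : ℕ} {X : Type*} (S : Set (Fin d → X)) (x0 : Fin d → X) (j : ℕ) :
    Set (Fin d → X) :=
  if h : j < d then {x | x ∈ S ∧ ∃ y, Conn S x y ∧ y ⟨j, h⟩ = x0 ⟨j, h⟩}
  else {x | x ∈ S ∧ ¬ ∃ y c, Conn S x y ∧ y c = x0 c}

lemma partM_subset {d : ℕ} {X : Type*} (S : Set (Fin d → X)) (x0 : Fin d → X) (j : ℕ) :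
    PartM S x0 j ⊆ S := by
  intro x hx
  unfold PartM at hx
  by_cases h : j < d
  · rw [dif_pos h] at hx; exact hx.1
  · rw [dif_neg h] at hx; exact hx.1

lemma partM_disjoint {d : ℕ} {X : Type*} {T : Set (Fin d → X)}
    (hone : OneSided T) (hac : AlmostAcyclic T) {x0 : Fin d → X} (hx0 : x0 ∈ T)
    {j k : ℕ} (hj : j < d + 1) (hk : k < d + 1) (hjk : j ≠ k) {x : Fin d → X}
    (hxj : x ∈ PartM (T \ {x0}) x0 j) (hxk : x ∈ PartM (T \ {x0}) x0 k) : False := by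
  unfold PartM at hxj hxk
  by_cases hjd : j < d <;> by_cases hkd : k < d
  · rw [dif_pos hjd] at hxj
    rw [dif_pos hkd] at hxk
    obtain ⟨hxS, y, hcy, hyj⟩ := hxj
    obtain ⟨-, y', hcy', hyk⟩ := hxk
    have : (⟨j, hjd⟩ : Fin d) = ⟨k, hkd⟩ :=
      coord_unique hone hac hx0 (conn_trans (conn_symm hcy) hcy') hyj hyk
    exact hjk (by simpa using this)
  · rw [dif_pos hjd] at hxj
    rw [dif_neg hkd] at hxk
    obtain ⟨hxS, y, hcy, hyj⟩ := hxj
    exact hxk.2 ⟨y, ⟨j, hjd⟩, hcy, hyj⟩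
  · rw [dif_neg hjd] at hxj
    rw [dif_pos hkd] at hxk
    obtain ⟨hxS, y, hcy, hyk⟩ := hxk
    exact hxj.2 ⟨y, ⟨k, hkd⟩, hcy, hyk⟩
  · exact hjk (by omega)

lemma partM_conn_invariant {d : ℕ} {X : Type*} (S : Set (Fin d → X)) (x0 : Fin d → X)
    {u v : Fin d → X} (hcuv : Conn S u v) (hvS : v ∈ S) {j : ℕ}
    (hu : u ∈ PartM S x0 j) : v ∈ PartM S x0 j := by
  unfold PartM at hu ⊢
  by_cases hjd : j < d
  · rw [dif_pos hjd] at hu ⊢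
    obtain ⟨-, w, hcw, hwl⟩ := hu
    exact ⟨hvS, w, conn_trans (conn_symm hcuv) hcw, hwl⟩
  · rw [dif_neg hjd] at hu ⊢
    exact ⟨hvS, fun ⟨w, c, hcw, hwc⟩ => hu.2 ⟨w, c, conn_trans hcuv hcw, hwc⟩⟩

theorem onesided_almostAcyclic_partition {d : ℕ} {X : Type*}
    (T : Set (Fin d → X)) (hfin : T.Finite) (hone : OneSided T) (hac : AlmostAcyclic T) :
    ∀ x0 ∈ T, ∃ L : ℕ, 0 < L ∧ ∃ M : ℕ → Set (Fin d → X),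
      (∀ j k, j < L → k < L → j ≠ k → Disjoint (M j) (M k)) ∧
      (⋃ j ∈ Finset.range L, M j) = T \ {x0} ∧
      (∀ i : Fin d, ∀ j k, j < L → k < L → j ≠ k →
        ∀ x ∈ M j, ∀ y ∈ M k, x i ≠ y i) ∧
      (∀ i : Fin d, ∀ j, j < L → ∀ x ∈ M j, x i = x0 i → (i : ℕ) = j) := by
  intro x0 hx0
  set S := T \ {x0} with hS
  refine ⟨d + 1, by omega, PartM S x0, ?_, ?_, ?_, ?_⟩
  case refine_1 =>
    intro j k hj hk hjk
    rw [Set.disjoint_left]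
    exact fun x hxj hxk => partM_disjoint hone hac hx0 hj hk hjk hxj hxk
  case refine_2 =>
    ext x
    simp only [Set.mem_iUnion, Finset.mem_range]
    constructor
    · rintro ⟨j, hj, hxj⟩
      exact partM_subset S x0 j hxj
    · intro hxS
      by_cases hex : ∃ y c, Conn S x y ∧ y c = x0 c
      · obtain ⟨y, c, hcy, hyc⟩ := hex
        refine ⟨c.1, by omega, ?_⟩
        unfold PartM
        rw [dif_pos c.2]
        exact ⟨hxS, y, hcy, by simpa using hyc⟩
      · refine ⟨d, by omega, ?_⟩
        unfold PartM
        rw [dif_neg (lt_irrefl d)]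
        exact ⟨hxS, hex⟩
  case refine_3 =>
    intro i j k hj hk hjk x hxj y hyk hxy
    have hxS : x ∈ S := partM_subset S x0 j hxj
    have hyS : y ∈ S := partM_subset S x0 k hyk
    by_cases hne : x = y
    · subst hne
      exact partM_disjoint hone hac hx0 hj hk hjk hxj hyk
    · have hconn : Conn S x y := conn_step hxS hyS hne ⟨i, hxy⟩
      exact partM_disjoint hone hac hx0 hj hk hjk (partM_conn_invariant S x0 hconn hyS hxj) hyk
  case refine_4 =>
    intro i j hj x hxj hxi
    have hxS : x ∈ S := partM_subset S x0 j hxj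
    unfold PartM at hxj
    by_cases hjd : j < d
    · rw [dif_pos hjd] at hxj
      obtain ⟨-, y, hcy, hyj⟩ := hxj
      have := coord_unique hone hac hx0 hcy hxi hyj
      simpa using congrArg Fin.val this
    · rw [dif_neg hjd] at hxj
      exact absurd ⟨x, i, conn_refl hxS, hxi⟩ hxj.2
end

section
/- Conversely, if 𝒯 ⊆ 𝒳^d is finite and for each x⁰ ∈ 𝒯 there is a partition (M_j)_{j∈ℒ} of 𝒯 \ {x⁰} satisfying: (1) Π_i[M_j] ∩ Π_i[M_k] = ∅ for all i ∈ d and j ≠ k, and (2) for all i, j and x ∈ M_j, x_i = x⁰_i implies i = j; then 𝒯 is one-sided and almost acyclic. -/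
theorem partition_implies_onesided_almostAcyclic {d : ℕ} {X : Type*}
    (T : Set (Fin d → X)) (hfin : T.Finite)
    (hpart : ∀ x0 ∈ T, ∃ L : ℕ, ∃ M : ℕ → Set (Fin d → X),
      (∀ j k, j < L → k < L → j ≠ k → Disjoint (M j) (M k)) ∧
      (⋃ j ∈ Finset.range L, M j) = T \ {x0} ∧
      (∀ i : Fin d, ∀ j k, j < L → k < L → j ≠ k →
        ∀ x ∈ M j, ∀ y ∈ M k, x i ≠ y i) ∧
      (∀ i : Fin d, ∀ j, j < L → ∀ x ∈ M j, x i = x0 i → (i : ℕ) = j)) :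
    OneSided T ∧ AlmostAcyclic T := by
  constructor
  · intro x hx y hy hxy i j hij
    by_contra h
    push_neg at h
    obtain ⟨hi, hj⟩ := h
    obtain ⟨K, M, hdisj, hcov, hproj, hcoord⟩ := hpart x hx
    have hy' : y ∈ (⋃ j ∈ Finset.range K, M j) := by
      rw [hcov]
      exact ⟨hy, fun h => hxy (Set.mem_singleton_iff.mp h).symm⟩
    simp only [Set.mem_iUnion, Finset.mem_range] at hy'
    obtain ⟨m, hm, hym⟩ := hy'
    have h1 := hcoord i m hm y hym hi.symm
    have h2 := hcoord j m hm y hym hj.symm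
    exact hij (Fin.ext (h1.trans h2.symm))
  · intro x L hcyc
    obtain ⟨hL3, hLx, hadj, hdist⟩ := hcyc
    have hx0 : x 0 ∈ T := (hadj 0 (by omega)).1
    obtain ⟨K, M, hdisj, hcov, hproj, hcoord⟩ := hpart (x 0) hx0
    have hmem : ∀ n, 1 ≤ n → n ≤ L - 1 → ∃ j, j < K ∧ x n ∈ M j := by
      intro n h1 h2
      have hxn : x n ∈ T := (hadj n (by omega)).1
      have hne : x n ≠ x 0 := fun h => hdist 0 n (by omega) (by omega) h.symm
      have hmem' : x n ∈ (⋃ j ∈ Finset.range K, M j) := by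
        rw [hcov]
        exact ⟨hxn, by simpa using hne⟩
      simpa only [Set.mem_iUnion, Finset.mem_range, exists_prop] using hmem'
    obtain ⟨j, hjK, hj1⟩ := hmem 1 le_rfl (by omega)
    have hall : ∀ n, 1 ≤ n → n ≤ L - 1 → x n ∈ M j := by
      intro n
      induction n with
      | zero => intro h; omega
      | succ k ih =>
        intro h1 h2
        rcases Nat.lt_or_ge k 1 with hk | hk
        · have hk1 : k + 1 = 1 := by omega
          rw [hk1]; exact hj1
        · have hxk := ih hk (by omega)
          obtain ⟨a, haK, hka⟩ := hmem (k + 1) h1 h2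
          by_cases hab : a = j
          · exact hab ▸ hka
          · obtain ⟨i, hi⟩ := (hadj k (by omega)).2.2.2
            exact absurd hi
              (hproj i j a hjK haK (fun h => hab h.symm) (x k) hxk (x (k + 1)) hka)
    obtain ⟨i, hi⟩ := (hadj 0 (by omega)).2.2.2
    have hiL : (i : ℕ) = j := hcoord i j hjK (x 1) hj1 hi.symm
    obtain ⟨i', hi'⟩ := (hadj (L - 1) (by omega)).2.2.2
    have hLeq : L - 1 + 1 = L := by omega
    have hi'0 : x (L - 1) i' = x 0 i' := by
      rw [hLeq, hLx] at hi'; exact hi'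
    have hxL1 : x (L - 1) ∈ M j := hall (L - 1) (by omega) le_rfl
    have hi'L : (i' : ℕ) = j := hcoord i' j hjK (x (L - 1)) hxL1 hi'0
    have hii' : i = i' := Fin.ext (hiL.trans hi'L.symm)
    refine ⟨i, 0, 1, L - 1, by omega, by omega, by omega, hi, ?_⟩
    rw [hii']
    calc x 1 i' = x 0 i' := by rw [← hii', ← hi]
      _ = x (L - 1) i' := hi'0.symm
end

section
/- Let Y be a recursively presented Polish space, C a Borel subset of Y, and (m_n) a sequence of Borel partial functions from a Borel subset of C into C. If M := ⋃_n Gr(m_n) is disjoint from the diagonal Δ(C) but M is not separable from Δ(C) by a potentially closed set, then there exist n < p and y ∈ C such that both m_n(y) and m_p(y) are defined. -/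
open Topology




/-- Auxiliary: a countable union of graphs of continuous functions over disjoint open
domains whose union is closed, is closed in the product. -/
lemma closed_union_graphs {X Z : Type*} [TopologicalSpace X] [TopologicalSpace Z] [T2Space Z]
    (A : Set X) (D : ℕ → Set X) (g : ℕ → X → Z) (f : ℕ → X → Z)
    (hA : IsClosed A) (hDo : ∀ n, IsOpen (D n)) (hg : ∀ n, Continuous (g n))
    (hgf : ∀ n, ∀ x ∈ D n, g n x = f n x)
    (hAD : A = ⋃ n, D n)
    (huniq : ∀ n k x, x ∈ D n → x ∈ D k → n = k) :
    IsClosed (⋃ n, {p : X × Z | p.1 ∈ D n ∧ p.2 = f n p.1}) := by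
  rw [← isOpen_compl_iff]
  have hset : (⋃ n, {p : X × Z | p.1 ∈ D n ∧ p.2 = f n p.1})ᶜ
      = (Aᶜ ×ˢ (Set.univ : Set Z)) ∪
        ⋃ n, ((D n ×ˢ (Set.univ : Set Z)) ∩ {p : X × Z | p.2 ≠ g n p.1}) := by
    ext ⟨x, z⟩
    simp only [Set.mem_compl_iff, Set.mem_iUnion, Set.mem_union, Set.mem_prod,
      Set.mem_inter_iff, Set.mem_setOf_eq, Set.mem_univ, and_true, not_exists, not_and]
    by_cases hx : x ∈ A
    · obtain ⟨n0, hn0⟩ : ∃ n, x ∈ D n := by rw [hAD] at hx; simpa using hx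
      constructor
      · intro hne
        right
        exact ⟨n0, hn0, by rw [hgf n0 x hn0]; exact hne n0 hn0⟩
      · rintro (hxa | ⟨k, hk, hne⟩) j hj hz
        · exact hxa hx
        · cases huniq k j x hk hj
          exact hne (by rw [hgf k x hk]; exact hz)
    · constructor
      · intro _
        left
        exact hx
      · intro _ j hj _
        exact hx (by rw [hAD]; exact Set.mem_iUnion.2 ⟨j, hj⟩)
  rw [hset]
  apply IsOpen.union
  · exact hA.isOpen_compl.prod isOpen_univ
  · apply isOpen_iUnion
    intro n
    apply IsOpen.inter ((hDo n).prod isOpen_univ)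
    have : IsClosed {p : X × Z | p.2 = g n p.1} :=
      isClosed_eq continuous_snd ((hg n).comp continuous_fst)
    exact this.isOpen_compl

/-- `P ⊆ Y²` is potentially closed: there are finer Polish topologies on each factor
making `P` closed in the product. -/
def PotClosed {Y : Type*} [tY : TopologicalSpace Y] (P : Set (Y × Y)) : Prop :=
  ∃ t0 t1 : TopologicalSpace Y,
    t0 ≤ tY ∧ t1 ≤ tY ∧ @PolishSpace Y t0 ∧ @PolishSpace Y t1 ∧
      @IsClosed (Y × Y) (@instTopologicalSpaceProd Y Y t0 t1) P

/-- If `M = ⋃_n Gr(m_n)` (graphs of Borel partial functions from Borel subsets of `C`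
into `C`) is disjoint from the diagonal `Δ(C)` but not separable from `Δ(C)` by a
potentially closed set, then some `m_n` and `m_p` (`n < p`) are both defined at
some `y ∈ C`. -/
theorem two_functions_defined_somewhere {Y : Type*} [TopologicalSpace Y] [PolishSpace Y]
    [MeasurableSpace Y] [BorelSpace Y]
    (C : Set Y) (hC : MeasurableSet C)
    (D : ℕ → Set Y) (m : ℕ → Y → Y)
    (hD : ∀ n, MeasurableSet (D n)) (hDC : ∀ n, D n ⊆ C)
    (hmC : ∀ n, ∀ y ∈ D n, m n y ∈ C)
    (hGr : ∀ n, MeasurableSet {p : Y × Y | p.1 ∈ D n ∧ p.2 = m n p.1})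
    (M : Set (Y × Y)) (hM : M = ⋃ n, {p : Y × Y | p.1 ∈ D n ∧ p.2 = m n p.1})
    (hdisj : Disjoint M {p : Y × Y | p.1 ∈ C ∧ p.2 = p.1})
    (hnsep : ¬ ∃ P : Set (Y × Y), PotClosed P ∧ M ⊆ P ∧
      Disjoint P {p : Y × Y | p.1 ∈ C ∧ p.2 = p.1}) :
    ∃ n p y, n < p ∧ y ∈ C ∧ y ∈ D n ∧ y ∈ D p := by
  classical
  letI tamb : TopologicalSpace Y := inferInstance
  have pamb : PolishSpace Y := inferInstance
  have hT2 : T2Space Y := inferInstance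
  by_contra hcon
  push_neg at hcon
  -- uniqueness of domains
  have huniq : ∀ n k x, x ∈ D n → x ∈ D k → n = k := by
    intro n k x hn hk
    by_contra hne
    rcases Nat.lt_or_ge n k with h | h
    · exact hcon n k x h (hDC n hn) hn hk
    · rcases lt_or_eq_of_le h with h' | h'
      · exact hcon k n x h' (hDC k hk) hk hn
      · exact hne h'.symm
  set g : ℕ → Y → Y := fun n y => if y ∈ D n then m n y else y with hgdef
  have hgmem : ∀ n, ∀ x ∈ D n, g n x = m n x := by
    intro n x hx; simp [hgdef, hx]
  -- measurability of g n
  have hgmeas : ∀ n, Measurable (g n) := by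
    intro n B hB
    have hs : MeasurableSet ({p : Y × Y | p.1 ∈ D n ∧ p.2 = m n p.1} ∩ (Set.univ ×ˢ B)) :=
      (hGr n).inter (MeasurableSet.univ.prod hB)
    have hinj : Set.InjOn Prod.fst ({p : Y × Y | p.1 ∈ D n ∧ p.2 = m n p.1} ∩ (Set.univ ×ˢ B)) := by
      rintro ⟨x, z⟩ ⟨⟨_, hz⟩, _⟩ ⟨x', z'⟩ ⟨⟨_, hz'⟩, _⟩ h
      simp only at h hz hz'
      subst h
      exact congrArg (Prod.mk x) (hz.trans hz'.symm)
    have himg : MeasurableSet (Prod.fst ''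
        ({p : Y × Y | p.1 ∈ D n ∧ p.2 = m n p.1} ∩ (Set.univ ×ˢ B))) :=
      hs.image_of_continuousOn_injOn continuous_fst.continuousOn hinj
    have heq : g n ⁻¹' B = (Prod.fst ''
        ({p : Y × Y | p.1 ∈ D n ∧ p.2 = m n p.1} ∩ (Set.univ ×ˢ B))) ∪ ((D n)ᶜ ∩ B) := by
      ext y
      by_cases hy : y ∈ D n
      · simp only [Set.mem_preimage, hgdef, hy, if_pos, Set.mem_union, Set.mem_image,
          Set.mem_inter_iff, Set.mem_setOf_eq, Set.mem_prod, Set.mem_univ, true_and,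
          Set.mem_compl_iff, not_true, false_and, or_false]
        constructor
        · intro hb
          exact ⟨(y, m n y), ⟨⟨hy, rfl⟩, hb⟩, rfl⟩
        · rintro ⟨⟨x, z⟩, ⟨⟨hx, hz⟩, hzb⟩, h⟩
          simp only at h hz
          subst h
          rw [← hz]
          exact hzb
      · simp only [Set.mem_preimage, hgdef, Set.mem_union, Set.mem_image,
          Set.mem_inter_iff, Set.mem_setOf_eq, Set.mem_prod, Set.mem_univ, true_and,
          Set.mem_compl_iff]
        rw [if_neg hy]
        constructor
        · intro hb
          right
          exact ⟨hy, hb⟩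
        · rintro (⟨⟨x, z⟩, ⟨⟨hx, hz⟩, hzb⟩, h⟩ | ⟨_, hb⟩)
          · simp only at h
            subst h
            exact absurd hx hy
          · exact hb
    rw [heq]
    exact himg.union (((hD n).compl).inter hB)
  -- finer topologies
  choose τg hτgle hτgc hτgp using fun n => (hgmeas n).exists_continuous
  choose τD hτDle hτDp hτDc hτDo using fun n => (hD n).isClopenable
  obtain ⟨τA, hτAle, hτAp, hτAc, hτAo⟩ := (MeasurableSet.iUnion hD).isClopenable
  set fam : (ℕ ⊕ ℕ ⊕ Unit) → TopologicalSpace Y :=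
    Sum.elim τg (Sum.elim τD (fun _ => τA)) with hfam
  obtain ⟨t0, ht0le, ht0Y, ht0p⟩ :=
    PolishSpace.exists_polishSpace_forall_le (t := tamb) (p := pamb) fam
      (fun i => match i with
        | Sum.inl n => hτgle n
        | Sum.inr (Sum.inl n) => hτDle n
        | Sum.inr (Sum.inr _) => hτAle)
      (fun i => match i with
        | Sum.inl n => hτgp n
        | Sum.inr (Sum.inl n) => hτDp n
        | Sum.inr (Sum.inr _) => hτAp)
  have hAclosed : IsClosed[t0] (⋃ n, D n) := hτAc.mono (ht0le (Sum.inr (Sum.inr ())))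
  have hDopen : ∀ n, IsOpen[t0] (D n) := fun n => (hτDo n).mono (ht0le (Sum.inr (Sum.inl n)))
  have hgcont : ∀ n, @Continuous Y Y t0 tamb (g n) := fun n =>
    continuous_le_dom (ht0le (Sum.inl n)) (hτgc n)
  have hMclosed : @IsClosed (Y × Y) (@instTopologicalSpaceProd Y Y t0 tamb) M := by
    rw [hM]
    exact @closed_union_graphs Y Y t0 tamb hT2 (⋃ n, D n) D g m
      hAclosed hDopen hgcont hgmem rfl huniq
  exact hnsep ⟨M, ⟨t0, tamb, ht0Y, le_rfl, ht0p, pamb, hMclosed⟩, subset_rfl, hdisj⟩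
end

section
/- Let Y₀, Y₁ be Polish spaces, c and c_n (n ∈ ω) continuous open partial functions from Y₀ into Y₁ with open domains, and set C^ε := ⋃_n Gr(c_{2n+ε}) for ε ∈ 2. Assume C⁰ is disjoint from C¹ ∪ Gr(c) and ∅ ≠ Gr(c) ⊆ closure(C⁰) ∩ closure(C¹). Then C⁰ is not separable from Gr(c) by a potentially closed set. -/
/-!
A finer Polish topology has the same Borel sets, so each of its basic open sets differs from an
open set of the original topology by a meagre set; on a comeagre set `G` the two topologies
therefore have the same neighbourhood filters within `G`. Consequently a potentially closed `P`
is relatively closed in a comeagre rectangle `G₀ × G₁`. Graphs of continuous open partial maps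
with open domain meet such a rectangle densely, so a point of `Gr(c) ∩ (G₀ × G₁)` lies in the
closure of `C⁰ ∩ (G₀ × G₁) ⊆ P`, hence in `P`.
-/

/-- `P ⊆ Y₀ × Y₁` is potentially closed: there are finer Polish topologies on the
factors making `P` closed in the product. -/
def PotClosed2 {Y0 Y1 : Type*} [tY0 : TopologicalSpace Y0] [tY1 : TopologicalSpace Y1]
    (P : Set (Y0 × Y1)) : Prop :=
  ∃ t0 : TopologicalSpace Y0, ∃ t1 : TopologicalSpace Y1,
    t0 ≤ tY0 ∧ t1 ≤ tY1 ∧ @PolishSpace Y0 t0 ∧ @PolishSpace Y1 t1 ∧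
      @IsClosed (Y0 × Y1) (@instTopologicalSpaceProd Y0 Y1 t0 t1) P

open Filter Set TopologicalSpace Topology

theorem Set.setOf_fst_mem_and_snd_eq_graphOn {X Y : Type*} (d : Set X) (g : X → Y) :
    {p : X × Y | p.1 ∈ d ∧ p.2 = g p.1} = d.graphOn g := by
  ext p
  simp [eq_comm]

section Graph

variable {X Y : Type*} [TopologicalSpace X] [BaireSpace X] [TopologicalSpace Y]

theorem graphOn_subset_closure_inter_prod {d : Set X} {g : X → Y} (hd : IsOpen d)
    (hg : ContinuousOn g d) (hgo : ∀ U ⊆ d, IsOpen U → IsOpen (g '' U))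
    {G0 : Set X} {G1 : Set Y} (hG0 : G0 ∈ residual X) (hG1 : G1 ∈ residual Y) :
    d.graphOn g ⊆ closure (d.graphOn g ∩ G0 ×ˢ G1) := by
  have := hd.baireSpace
  have hopen : IsOpenMap (d.domRestrict g) := fun U hU => by
    rw [domRestrict_eq, image_comp]
    exact hgo _ (Subtype.coe_image_subset _ _) (hd.isOpenMap_subtype_val U hU)
  have hdense : Dense (((↑) : d → X) ⁻¹' G0 ∩ d.domRestrict g ⁻¹' G1) :=
    dense_of_mem_residual <| inter_mem
      (tendsto_residual_of_isOpenMap continuous_subtype_val hd.isOpenMap_subtype_val hG0)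
      (tendsto_residual_of_isOpenMap hg.domRestrict hopen hG1)
  have hφ : Continuous fun x : d => ((x : X), g x) := continuous_subtype_val.prodMk hg.domRestrict
  rw [graphOn, image_eq_range]
  rintro _ ⟨x, rfl⟩
  have hx : x ∈ closure (((↑) : d → X) ⁻¹' G0 ∩ d.domRestrict g ⁻¹' G1) :=
    hdense.closure_eq ▸ mem_univ x
  refine closure_mono ?_ (image_closure_subset_closure_image hφ ⟨x, hx, rfl⟩)
  rintro _ ⟨y, ⟨hy0, hy1⟩, rfl⟩
  exact ⟨⟨y, rfl⟩, hy0, hy1⟩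

theorem iUnion_graphOn_subset_closure_inter_prod {ι : Type*} {d : ι → Set X} {g : ι → X → Y}
    (hd : ∀ n, IsOpen (d n)) (hg : ∀ n, ContinuousOn (g n) (d n))
    (hgo : ∀ n, ∀ U ⊆ d n, IsOpen U → IsOpen (g n '' U))
    {G0 : Set X} {G1 : Set Y} (hG0 : G0 ∈ residual X) (hG1 : G1 ∈ residual Y) :
    ⋃ n, (d n).graphOn (g n) ⊆ closure ((⋃ n, (d n).graphOn (g n)) ∩ G0 ×ˢ G1) :=
  iUnion_subset fun n => (graphOn_subset_closure_inter_prod (hd n) (hg n) (hgo n) hG0 hG1).trans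
    (closure_mono (inter_subset_inter_left _ (subset_iUnion (fun n => (d n).graphOn (g n)) n)))

end Graph

theorem exists_mem_residual_nhdsWithin_eq_of_le {Y : Type*} {t τ : TopologicalSpace Y}
    (ht : @PolishSpace Y t) (hτ : @PolishSpace Y τ) (hle : t ≤ τ) :
    ∃ G ∈ @residual Y τ, ∀ x ∈ G, @nhdsWithin Y t x G = @nhdsWithin Y τ x G := by
  obtain ⟨b, hbc, -, hb⟩ := @exists_countable_basis Y t _
  have hbaire : ∀ s ∈ b, ∃ u, IsOpen[τ] u ∧ ∀ᶠ x in @residual Y τ, x ∈ s ↔ x ∈ u := by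
    intro s hs
    have hmeas : @MeasurableSet Y (@borel Y τ) s :=
      MeasureTheory.borel_eq_borel_of_le ht hτ hle ▸
        MeasurableSpace.measurableSet_generateFrom (@IsTopologicalBasis.isOpen Y t _ _ hb hs)
    have hbms := @MeasurableSet.baireMeasurableSet Y τ s (@borel Y τ)
      (@BorelSpace.mk Y τ (@borel Y τ) rfl) hmeas
    simpa only [eventuallyEq_set] using hbms.residualEq_isOpen
  choose! u hu hsu using hbaire
  refine ⟨⋂ s ∈ b, {x | x ∈ s ↔ x ∈ u s}, (countable_bInter_mem hbc).2 hsu, fun x hx => ?_⟩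
  refine le_antisymm (inf_le_inf_right _ (_root_.nhds_mono hle)) fun U hU => ?_
  obtain ⟨V, hV, hxV, hVU⟩ := (@mem_nhdsWithin Y t _ _ _).1 hU
  obtain ⟨s, hs, hxs, hsV⟩ :=
    @IsTopologicalBasis.exists_subset_of_mem_open Y t _ hb _ _ hxV hV
  refine (@mem_nhdsWithin Y τ _ _ _).2 ⟨u s, hu s hs, (mem_iInter₂.1 hx s hs).1 hxs, ?_⟩
  rintro y ⟨hyu, hyG⟩
  exact hVU ⟨hsV ((mem_iInter₂.1 hyG s hs).2 hyu), hyG⟩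

theorem mem_closure_of_nhdsWithin_eq {X : Type*} {t τ : TopologicalSpace X} {G s : Set X}
    {x : X} (hsG : s ⊆ G) (hx : @nhdsWithin X t x G = @nhdsWithin X τ x G) (h : x ∈ closure[τ] s) :
    x ∈ closure[t] s := by
  have hs : @nhdsWithin X t x s = @nhdsWithin X τ x s := by
    rw [← inter_eq_right.2 hsG, @nhdsWithin_inter' X t, @nhdsWithin_inter' X τ, hx]
  rw [@mem_closure_iff_nhdsWithin_neBot X t, hs]
  exact (@mem_closure_iff_nhdsWithin_neBot X τ _ _).1 h

theorem PotClosed2.exists_mem_residual_closure_inter_prod_subset {Y0 Y1 : Type*}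
    [tY0 : TopologicalSpace Y0] [pY0 : PolishSpace Y0] [tY1 : TopologicalSpace Y1]
    [pY1 : PolishSpace Y1] {P : Set (Y0 × Y1)} (hP : PotClosed2 P) :
    ∃ G0 ∈ residual Y0, ∃ G1 ∈ residual Y1, closure (P ∩ G0 ×ˢ G1) ∩ G0 ×ˢ G1 ⊆ P := by
  obtain ⟨t0, t1, hle0, hle1, hpol0, hpol1, hclosed⟩ := hP
  obtain ⟨G0, hG0, h0⟩ := exists_mem_residual_nhdsWithin_eq_of_le hpol0 pY0 hle0
  obtain ⟨G1, hG1, h1⟩ := exists_mem_residual_nhdsWithin_eq_of_le hpol1 pY1 hle1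
  refine ⟨G0, hG0, G1, hG1, ?_⟩
  rintro ⟨a, b⟩ ⟨hab, ha, hb⟩
  have hnhds : @nhdsWithin _ (@instTopologicalSpaceProd Y0 Y1 t0 t1) (a, b) (G0 ×ˢ G1) =
      @nhdsWithin _ (@instTopologicalSpaceProd Y0 Y1 tY0 tY1) (a, b) (G0 ×ˢ G1) := by
    rw [@nhdsWithin_prod_eq Y0 Y1 t0 t1, @nhdsWithin_prod_eq Y0 Y1 tY0 tY1, h0 a ha, h1 b hb]
  exact (@IsClosed.closure_subset_iff _ (@instTopologicalSpaceProd Y0 Y1 t0 t1) _ _ hclosed).2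
    inter_subset_left (mem_closure_of_nhdsWithin_eq inter_subset_right hnhds hab)

theorem not_separable_by_potentially_closed_general {Y0 Y1 : Type*}
    [TopologicalSpace Y0] [PolishSpace Y0] [TopologicalSpace Y1] [PolishSpace Y1]
    (domc : Set Y0) (c : Y0 → Y1)
    (hdomc : IsOpen domc) (hccont : ContinuousOn c domc)
    (hcopen : ∀ U ⊆ domc, IsOpen U → IsOpen (c '' U))
    (dom : ℕ → Set Y0) (cn : ℕ → Y0 → Y1)
    (hdom : ∀ n, IsOpen (dom n)) (hcncont : ∀ n, ContinuousOn (cn n) (dom n))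
    (hcnopen : ∀ n, ∀ U ⊆ dom n, IsOpen U → IsOpen (cn n '' U))
    (Grc : Set (Y0 × Y1)) (hGrc : Grc = {p : Y0 × Y1 | p.1 ∈ domc ∧ p.2 = c p.1})
    (C0 C1 : Set (Y0 × Y1))
    (hC0 : C0 = ⋃ n, {p : Y0 × Y1 | p.1 ∈ dom (2 * n) ∧ p.2 = cn (2 * n) p.1})
    (hne : Grc.Nonempty)
    (hsub : Grc ⊆ closure C0 ∩ closure C1) :
    ¬ ∃ P : Set (Y0 × Y1), PotClosed2 P ∧ C0 ⊆ P ∧ Disjoint P Grc := by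
  rintro ⟨P, hP, hC0P, hPG⟩
  obtain ⟨G0, hG0, G1, hG1, hPrel⟩ := hP.exists_mem_residual_closure_inter_prod_subset
  simp only [setOf_fst_mem_and_snd_eq_graphOn] at hGrc hC0
  subst hGrc hC0
  obtain ⟨z, hz, hzG⟩ : (domc.graphOn c ∩ G0 ×ˢ G1).Nonempty :=
    closure_nonempty_iff.1 <|
      hne.mono (graphOn_subset_closure_inter_prod hdomc hccont hcopen hG0 hG1)
  have hC0G : z ∈ closure (_ ∩ G0 ×ˢ G1) := closure_minimal
    (iUnion_graphOn_subset_closure_inter_prod (fun n => hdom _) (fun n => hcncont _)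
      (fun n => hcnopen _) hG0 hG1) isClosed_closure (hsub hz).1
  exact disjoint_left.1 hPG (hPrel ⟨closure_mono (inter_subset_inter_left _ hC0P) hC0G, hzG⟩) hz

theorem not_separable_by_potentially_closed {Y0 Y1 : Type*}
    [TopologicalSpace Y0] [PolishSpace Y0] [TopologicalSpace Y1] [PolishSpace Y1]
    (domc : Set Y0) (c : Y0 → Y1)
    (hdomc : IsOpen domc) (hccont : ContinuousOn c domc)
    (hcopen : ∀ U ⊆ domc, IsOpen U → IsOpen (c '' U))
    (dom : ℕ → Set Y0) (cn : ℕ → Y0 → Y1)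
    (hdom : ∀ n, IsOpen (dom n)) (hcncont : ∀ n, ContinuousOn (cn n) (dom n))
    (hcnopen : ∀ n, ∀ U ⊆ dom n, IsOpen U → IsOpen (cn n '' U))
    (Grc : Set (Y0 × Y1)) (hGrc : Grc = {p : Y0 × Y1 | p.1 ∈ domc ∧ p.2 = c p.1})
    (C0 C1 : Set (Y0 × Y1))
    (hC0 : C0 = ⋃ n, {p : Y0 × Y1 | p.1 ∈ dom (2 * n) ∧ p.2 = cn (2 * n) p.1})
    (hC1 : C1 = ⋃ n, {p : Y0 × Y1 | p.1 ∈ dom (2 * n + 1) ∧ p.2 = cn (2 * n + 1) p.1})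
    (hdisj : Disjoint C0 (C1 ∪ Grc)) (hne : Grc.Nonempty)
    (hsub : Grc ⊆ closure C0 ∩ closure C1) :
    ¬ ∃ P : Set (Y0 × Y1), PotClosed2 P ∧ C0 ⊆ P ∧ Disjoint P Grc :=
  not_separable_by_potentially_closed_general domc c hdomc hccont hcopen dom cn hdom hcncont hcnopen
    Grc hGrc C0 C1 hC0 hne hsub
end

section
/- Define c : 2^ω → 2^ω by c(α)(k) := α(2k), and for each n let h_n be a homeomorphism of 2^ω given by permuting coordinates such that h_n(α)(k) = c(α)(k) for k ∈ S_n and h_n(α)(k) = α(ψ_n(k)) for k ∉ S_n, where S_n ⊆ ω is as in Lemma 7.7 (S_n = φ_{n-1}[2ω] ∪ n, with the recursion φ_n(k) = ψ_n^{-1}(k) if k ∉ 2S_n, k/2 if k ∈ 2S_n, and ψ_{n+1} : ω∖S_{n+1} → ω∖2S_{n+1} a bijection). Then the composition identity c ∘ h_n^{-1} ∘ h_p = c ∘ h_n^{-1} ∘ c holds whenever n < p. -/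
/-- With `c(α)(k) = α(2k)` and the homeomorphisms `h_n` of `2^ω` built from the
recursion `S₀ = ∅`, `ψ₀ = id`, `φ_n(k) = ψ_n⁻¹(k)` if `k ∉ 2S_n` and `k/2` if
`k ∈ 2S_n`, `S_{n+1} = φ_n[2ω] ∪ {0,…,n}`, `ψ_{n+1} : ω∖S_{n+1} → ω∖2S_{n+1}` a
bijection, and `h_n(α)(k) = c(α)(k)` for `k ∈ S_n`, `α(ψ_n(k))` for `k ∉ S_n`,
one has `c ∘ h_n⁻¹ ∘ h_p = c ∘ h_n⁻¹ ∘ c` whenever `n < p`. -/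
theorem composition_identity
    (S : ℕ → Set ℕ) (ψ ψinv φ : ℕ → ℕ → ℕ)
    (hS0 : S 0 = ∅) (hψ0 : ψ 0 = id)
    (hbij : ∀ n, Set.BijOn (ψ n) {k | k ∉ S n} {k | ¬ ∃ j ∈ S n, k = 2 * j})
    (hinv : ∀ n, Set.InvOn (ψinv n) (ψ n) {k | k ∉ S n} {k | ¬ ∃ j ∈ S n, k = 2 * j})
    (hφ1 : ∀ n k, (∃ j ∈ S n, k = 2 * j) → φ n k = k / 2)
    (hφ2 : ∀ n k, ¬ (∃ j ∈ S n, k = 2 * j) → φ n k = ψinv n k)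
    (hSsucc : ∀ n, S (n + 1) = (φ n '' {k | ∃ j, k = 2 * j}) ∪ {m | m ≤ n})
    (c : (ℕ → Bool) → ℕ → Bool) (hc : ∀ α k, c α k = α (2 * k))
    (h hinvF : ℕ → (ℕ → Bool) → ℕ → Bool)
    (hh1 : ∀ n α k, k ∈ S n → h n α k = c α k)
    (hh2 : ∀ n α k, k ∉ S n → h n α k = α (ψ n k))
    (hhinv : ∀ n, Function.LeftInverse (hinvF n) (h n) ∧
      Function.RightInverse (hinvF n) (h n)) :
    ∀ n p, n < p → c ∘ hinvF n ∘ h p = c ∘ hinvF n ∘ c := by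
  -- φ m (2j) = j for j ∈ S m
  have hφdouble : ∀ m j, j ∈ S m → φ m (2 * j) = j := by
    intro m j hj
    rw [hφ1 m (2 * j) ⟨j, hj, rfl⟩]
    omega
  -- φ m of any even number is in S (m+1)
  have hkey : ∀ m k, φ m (2 * k) ∈ S (m + 1) := by
    intro m k
    rw [hSsucc m]
    exact Or.inl ⟨2 * k, ⟨k, rfl⟩, rfl⟩
  -- monotonicity
  have hmono : ∀ m, S m ⊆ S (m + 1) := by
    intro m j hj
    have := hkey m j
    rwa [hφdouble m j hj] at this
  have hmono' : ∀ m q, m ≤ q → S m ⊆ S q := by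
    intro m q hle
    induction q with
    | zero =>
      intro x hx
      have : m = 0 := by omega
      subst this; exact hx
    | succ q ih =>
      rcases Nat.lt_or_ge m (q + 1) with hlt | hge
      · exact fun x hx => hmono q (ih (by omega) hx)
      · have : m = q + 1 := by omega
        subst this; exact fun x hx => hx
  -- hinvF formula : hinvF n γ = γ ∘ φ n
  have hinvF_eq : ∀ n γ k, hinvF n γ k = γ (φ n k) := by
    intro n γ k
    have hγ : h n (fun j => γ (φ n j)) = γ := by
      funext m
      by_cases hm : m ∈ S n
      · rw [hh1 n _ m hm, hc]
        exact congrArg γ (hφdouble n m hm)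
      · rw [hh2 n _ m hm]
        have hψm : ψ n m ∈ {k | ¬ ∃ j ∈ S n, k = 2 * j} := (hbij n).mapsTo hm
        rw [hφ2 n (ψ n m) hψm]
        exact congrArg γ ((hinv n).1 hm)
    conv_lhs => rw [← hγ, (hhinv n).1]
  intro n p hnp
  funext α
  funext k
  simp only [Function.comp_apply]
  rw [hc, hc, hinvF_eq, hinvF_eq]
  have hin : φ n (2 * k) ∈ S p := hmono' (n + 1) p (by omega) (hkey n k)
  rw [hh1 p α _ hin, hc]
end
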